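/- arXiv:1110.5594 — 3 statements merged into one kernel-verified Lean document; each statement's English description precedes it below -/
import Mathlib

section
/- There is a positive constant c, depending only on n and β > 0, such that for every R > 0 and every z_0 = (x_0, y_0) in the closed upper half-plane, the volume of the Koch ball B_R(z_0) with respect to the measure y^β dx dy satisfies c^{-1} R^n (R + sqrt(y_0))^{n+2β} ≤ |B_R(z_0)|_β ≤ c R^n (R + sqrt(y_0))^{n+2β}, where n = 2. -/
/-!
The Koch ball `B_R(z₀)` has Euclidean size comparable to `R (R + √y₀)`: it lies in the square of
half-side `2R(R + √y₀)` around `z₀`, and contains a square of half-side `R(R + √y₀)/20` sitting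
at height `R(R + √y₀)/10` above `z₀`. On the outer square `y ≤ 2(R + √y₀)²`, and on the inner one
`y ≥ (R + √y₀)²/40`, so the weight `y^β` is comparable to `(R + √y₀)^{2β}` where it matters, and
both bounds follow by comparing the integral with constants on the two squares.
-/

open MeasureTheory

noncomputable def enorm2 (z w : ℝ × ℝ) : ℝ :=
  Real.sqrt ((z.1 - w.1)^2 + (z.2 - w.2)^2)

/-- The Koch metric on the closed upper half-plane. -/
noncomputable def kochDist (z w : ℝ × ℝ) : ℝ :=
  enorm2 z w / Real.sqrt (z.2 + w.2 + enorm2 z w)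

/-- The Koch ball relative to the open upper half-plane `H = ℝ × (0,∞)`. -/
def kochBall (R : ℝ) (z₀ : ℝ × ℝ) : Set (ℝ × ℝ) :=
  {z | 0 < z.2 ∧ kochDist z z₀ < R}

section SetIntegral

variable {X : Type*} [MeasurableSpace X] {μ : Measure X} {f : X → ℝ} {s t : Set X} {m M : ℝ}

theorem mul_measureReal_le_setIntegral_of_subset (hst : s ⊆ t) (hs : MeasurableSet s)
    (ht : MeasurableSet t) (hμs : μ s ≠ ⊤) (hf : IntegrableOn f t μ) (hf0 : ∀ x ∈ t, 0 ≤ f x)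
    (hm : ∀ x ∈ s, m ≤ f x) : m * μ.real s ≤ ∫ x in t, f x ∂μ :=
  (setIntegral_ge_of_const_le_real hs hμs hm (hf.mono_set hst)).trans
    (setIntegral_mono_set hf (ae_restrict_of_forall_mem ht hf0) hst.eventuallyLE)

theorem setIntegral_le_mul_measureReal_of_subset (hst : s ⊆ t) (hs : MeasurableSet s)
    (hμt : μ t ≠ ⊤) (hf : IntegrableOn f s μ) (hM : ∀ x ∈ s, f x ≤ M) (hM0 : 0 ≤ M) :
    ∫ x in s, f x ∂μ ≤ M * μ.real t :=
  calc ∫ x in s, f x ∂μ ≤ ∫ _ in s, M ∂μ :=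
        setIntegral_mono_on hf (integrableOn_const (measure_ne_top_of_subset hst hμt)) hs hM
    _ = M * μ.real s := by rw [setIntegral_const, smul_eq_mul, mul_comm]
    _ ≤ M * μ.real t := mul_le_mul_of_nonneg_left (measureReal_mono hst hμt) hM0

end SetIntegral

theorem measureReal_ball_prod (z : ℝ × ℝ) {r : ℝ} (hr : 0 ≤ r) :
    volume.real (Metric.ball z r) = (2 * r) ^ 2 := by
  rw [← ball_prod_same, Measure.volume_eq_prod, measureReal_prod_prod, Real.volume_real_ball hr,
    Real.volume_real_ball hr, sq]

theorem abs_snd_sub_le_dist (z w : ℝ × ℝ) : |z.2 - w.2| ≤ dist z w :=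
  le_max_right _ _

theorem abs_snd_sub_lt_of_mem_ball {z c : ℝ × ℝ} {r : ℝ} (hz : z ∈ Metric.ball c r) :
    |z.2 - c.2| < r :=
  (abs_snd_sub_le_dist z c).trans_lt hz

theorem enorm2_nonneg (z w : ℝ × ℝ) : 0 ≤ enorm2 z w := Real.sqrt_nonneg _

theorem enorm2_sq (z w : ℝ × ℝ) : enorm2 z w ^ 2 = (z.1 - w.1) ^ 2 + (z.2 - w.2) ^ 2 :=
  Real.sq_sqrt (by positivity)

theorem dist_le_enorm2 (z w : ℝ × ℝ) : dist z w ≤ enorm2 z w := by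
  rw [Prod.dist_eq, Real.dist_eq, Real.dist_eq, ← Real.sqrt_sq_eq_abs, ← Real.sqrt_sq_eq_abs]
  exact max_le (Real.sqrt_le_sqrt (le_add_of_nonneg_right (sq_nonneg _)))
    (Real.sqrt_le_sqrt (le_add_of_nonneg_left (sq_nonneg _)))

theorem kochDist_lt_iff {z w : ℝ × ℝ} {R : ℝ} (hD : 0 < z.2 + w.2 + enorm2 z w) (hR : 0 ≤ R) :
    kochDist z w < R ↔ enorm2 z w ^ 2 < R ^ 2 * (z.2 + w.2 + enorm2 z w) := by
  have hRD : R * √(z.2 + w.2 + enorm2 z w) = √(R ^ 2 * (z.2 + w.2 + enorm2 z w)) := by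
    rw [Real.sqrt_mul (sq_nonneg R), Real.sqrt_sq hR]
  rw [kochDist, div_lt_iff₀ (Real.sqrt_pos.2 hD), hRD, Real.lt_sqrt (enorm2_nonneg z w)]

theorem measurableSet_kochBall (R : ℝ) (z₀ : ℝ × ℝ) : MeasurableSet (kochBall R z₀) :=
  (measurableSet_lt measurable_const measurable_snd).inter
    (measurableSet_lt (f := fun z => kochDist z z₀) (by unfold kochDist enorm2; fun_prop)
      measurable_const)

theorem kochBall_subset_ball {R : ℝ} {z₀ : ℝ × ℝ} (hR : 0 < R) (hy₀ : 0 ≤ z₀.2) :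
    kochBall R z₀ ⊆ Metric.ball z₀ (2 * R * (R + √z₀.2)) := by
  rintro z ⟨hz, hzR⟩
  have hr := enorm2_nonneg z z₀
  rw [kochDist_lt_iff (by positivity) hR.le] at hzR
  have hzy : z.2 - z₀.2 ≤ enorm2 z z₀ :=
    (le_abs_self _).trans ((abs_snd_sub_le_dist z z₀).trans (dist_le_enorm2 z z₀))
  have hu : √z₀.2 ^ 2 = z₀.2 := Real.sq_sqrt hy₀
  refine (dist_le_enorm2 z z₀).trans_lt ?_
  by_contra! h
  have hu0 := Real.sqrt_nonneg z₀.2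
  nlinarith [mul_le_mul_of_nonneg_right h hr, mul_le_mul_of_nonneg_left hzy (sq_nonneg R),
    mul_nonneg (mul_nonneg hR.le hu0) (by nlinarith : 0 ≤ enorm2 z z₀ - 2 * R * √z₀.2)]

theorem ball_subset_kochBall {R ε : ℝ} {z₀ : ℝ × ℝ} (hR : 0 ≤ R) (hy₀ : 0 ≤ z₀.2)
    (h : 10 * ε ^ 2 ≤ R ^ 2 * (2 * z₀.2 + ε)) :
    Metric.ball (z₀.1, z₀.2 + 2 * ε) ε ⊆ kochBall R z₀ := by
  intro z hz
  rw [Metric.mem_ball, Prod.dist_eq, max_lt_iff, Real.dist_eq, Real.dist_eq] at hz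
  obtain ⟨hx, hy⟩ := hz
  obtain ⟨hx₁, hx₂⟩ := abs_lt.1 hx
  obtain ⟨hy₁, hy₂⟩ := abs_lt.1 hy
  have hr := enorm2_nonneg z z₀
  have hz2 : z₀.2 + ε < z.2 := by linarith
  refine ⟨by linarith, (kochDist_lt_iff (by linarith) hR).2 ?_⟩
  have hr2 : enorm2 z z₀ ^ 2 < 10 * ε ^ 2 := by rw [enorm2_sq]; nlinarith
  have hD : 2 * z₀.2 + ε ≤ z.2 + z₀.2 + enorm2 z z₀ := by linarith
  nlinarith [mul_le_mul_of_nonneg_left hD (sq_nonneg R)]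

theorem snd_lt_of_mem_kochBall {R : ℝ} {z₀ z : ℝ × ℝ} (hR : 0 < R) (hy₀ : 0 ≤ z₀.2)
    (hz : z ∈ kochBall R z₀) : z.2 < 2 * (R + √z₀.2) ^ 2 := by
  have hz₂ := (abs_lt.1 (abs_snd_sub_lt_of_mem_ball (kochBall_subset_ball hR hy₀ hz))).2
  nlinarith [Real.sq_sqrt hy₀, Real.sqrt_nonneg z₀.2]

section RpowSnd

variable {β R : ℝ} {z₀ : ℝ × ℝ}

theorem integrableOn_rpow_snd_kochBall (hβ : 0 ≤ β) (hR : 0 < R) (hy₀ : 0 ≤ z₀.2) :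
    IntegrableOn (fun z : ℝ × ℝ => z.2 ^ β) (kochBall R z₀) :=
  Measure.integrableOn_of_bounded (M := (2 * (R + √z₀.2) ^ 2) ^ β)
    (measure_ne_top_of_subset (kochBall_subset_ball hR hy₀) measure_ball_lt_top.ne)
    (measurable_snd.pow_const β).aestronglyMeasurable <|
      ae_restrict_of_forall_mem (measurableSet_kochBall R z₀) fun z hz => by
        rw [Real.norm_of_nonneg (Real.rpow_nonneg hz.1.le β)]
        exact Real.rpow_le_rpow hz.1.le (snd_lt_of_mem_kochBall hR hy₀ hz).le hβ

theorem setIntegral_rpow_snd_kochBall_le (hβ : 0 ≤ β) (hR : 0 < R) (hy₀ : 0 ≤ z₀.2) :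
    ∫ z in kochBall R z₀, z.2 ^ β ≤
      (2 * (R + √z₀.2) ^ 2) ^ β * (4 * R * (R + √z₀.2)) ^ 2 := by
  have hρ : 0 ≤ 2 * R * (R + √z₀.2) := by positivity
  calc ∫ z in kochBall R z₀, z.2 ^ β
      ≤ (2 * (R + √z₀.2) ^ 2) ^ β * volume.real (Metric.ball z₀ (2 * R * (R + √z₀.2))) :=
        setIntegral_le_mul_measureReal_of_subset (kochBall_subset_ball hR hy₀)
          (measurableSet_kochBall R z₀) measure_ball_lt_top.ne
          (integrableOn_rpow_snd_kochBall hβ hR hy₀)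
          (fun z hz => Real.rpow_le_rpow hz.1.le (snd_lt_of_mem_kochBall hR hy₀ hz).le hβ)
          (by positivity)
    _ = (2 * (R + √z₀.2) ^ 2) ^ β * (4 * R * (R + √z₀.2)) ^ 2 := by
        rw [measureReal_ball_prod z₀ hρ]
        ring

theorem le_setIntegral_rpow_snd_kochBall (hβ : 0 ≤ β) (hR : 0 < R) (hy₀ : 0 ≤ z₀.2) :
    ((R + √z₀.2) ^ 2 / 40) ^ β * (R * (R + √z₀.2) / 10) ^ 2 ≤
      ∫ z in kochBall R z₀, z.2 ^ β := by
  set ε := R * (R + √z₀.2) / 20 with hε_def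
  have hε : 0 ≤ ε := by positivity
  have hu := Real.sq_sqrt hy₀
  have hinner : Metric.ball (z₀.1, z₀.2 + 2 * ε) ε ⊆ kochBall R z₀ :=
    ball_subset_kochBall hR.le hy₀ (by
      rw [hε_def]
      nlinarith [mul_nonneg (sq_nonneg R) (sq_nonneg √z₀.2), pow_nonneg hR.le 4,
        congrArg (R ^ 2 * ·) hu])
  calc ((R + √z₀.2) ^ 2 / 40) ^ β * (R * (R + √z₀.2) / 10) ^ 2
      = ((R + √z₀.2) ^ 2 / 40) ^ β * volume.real (Metric.ball (z₀.1, z₀.2 + 2 * ε) ε) := by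
        rw [measureReal_ball_prod _ hε]
        ring
    _ ≤ ∫ z in kochBall R z₀, z.2 ^ β := by
        refine mul_measureReal_le_setIntegral_of_subset hinner Metric.isOpen_ball.measurableSet
          (measurableSet_kochBall R z₀) measure_ball_lt_top.ne
          (integrableOn_rpow_snd_kochBall hβ hR hy₀) (fun z hz => Real.rpow_nonneg hz.1.le β)
          fun z hz => Real.rpow_le_rpow (by positivity) ?_ hβ
        have hz₂ := (abs_lt.1 (abs_snd_sub_lt_of_mem_ball hz)).1
        nlinarith [mul_nonneg hR.le (Real.sqrt_nonneg z₀.2)]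

end RpowSnd

/-- Volume of Koch balls with respect to the measure `y^β dx dy` (with `n = 2`):
there is `c > 0`, depending only on `β`, with
`c⁻¹ R² (R + √y₀)^{2+2β} ≤ |B_R(z₀)|_β ≤ c R² (R + √y₀)^{2+2β}`. -/
theorem kochBall_volume_estimate (β : ℝ) (hβ : 0 < β) :
    ∃ c > 0, ∀ R > 0, ∀ z₀ : ℝ × ℝ, 0 ≤ z₀.2 →
      c⁻¹ * R ^ 2 * (R + Real.sqrt z₀.2) ^ ((2:ℝ) + 2 * β) ≤
          (∫ z in kochBall R z₀, z.2 ^ β) ∧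
      (∫ z in kochBall R z₀, z.2 ^ β) ≤
          c * R ^ 2 * (R + Real.sqrt z₀.2) ^ ((2:ℝ) + 2 * β) := by
  refine ⟨100 * 40 ^ β, by positivity, fun R hR z₀ hy₀ => ?_⟩
  have hs : 0 < R + √z₀.2 := by positivity
  have hpow : (R + √z₀.2) ^ ((2:ℝ) + 2 * β) = (R + √z₀.2) ^ 2 * ((R + √z₀.2) ^ 2) ^ β := by
    rw [Real.rpow_add hs, Real.rpow_mul hs.le, Real.rpow_two]
  constructor
  · refine le_of_eq_of_le ?_ (le_setIntegral_rpow_snd_kochBall hβ.le hR hy₀)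
    rw [Real.div_rpow (by positivity) (by norm_num), hpow]
    field_simp
    ring
  · calc ∫ z in kochBall R z₀, z.2 ^ β
        ≤ (2 * (R + √z₀.2) ^ 2) ^ β * (4 * R * (R + √z₀.2)) ^ 2 :=
          setIntegral_rpow_snd_kochBall_le hβ.le hR hy₀
      _ = 16 * 2 ^ β * (R ^ 2 * ((R + √z₀.2) ^ 2 * ((R + √z₀.2) ^ 2) ^ β)) := by
          rw [Real.mul_rpow (by norm_num) (by positivity)]
          ring
      _ ≤ 100 * 40 ^ β * R ^ 2 * (R + √z₀.2) ^ ((2:ℝ) + 2 * β) := by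
          rw [hpow, mul_assoc (100 * 40 ^ β)]
          gcongr <;> norm_num
end

section
/- Let β > 0 and fix k > 1 such that 2 k^{-β} = 1/2. For any function u ∈ L²((0,kδ), y^{β-1} dy) with u_y ∈ L²((0,kδ), y^β dy), and any constant c ∈ R, one has ∫_0^δ |u(y)-c|² y^{β-1} dy ≤ 2 k^{-β} ∫_0^{kδ} |u(y)-c|² y^{β-1} dy + C_0 ∫_0^{kδ} |u_y(y)|² y^β dy, where C_0 = 2δ(1+k^{1-β})/|1-β| if β ≠ 1 and C_0 = 2δ log k if β = 1. Consequently, absorbing the first term, ∫_0^δ |u-c|² y^{β-1} dy ≤ (4k^{-β}/(1-2k^{-β})) ∫_δ^{kδ} |u-c|² y^{β-1} dy + (C_0/(1-2k^{-β})) ∫_0^{kδ} |u_y|² y^β dy. -/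
/-!
Write `u y - c = (u (k y) - c) - ∫_y^{ky} u'`. Cauchy–Schwarz with the weights `t^β` and `t^{-β}`
bounds `(∫_y^{ky} u')²` by `(∫_y^{ky} u'² t^β) · y^{1-β} ∫_1^k s^{-β}`, and the factor `y^{1-β}` is
cancelled exactly by the weight `y^{β-1}`. Integrating over `(0, δ]` and substituting `y' = k y` in
the `u (k y)` term produces `2 k^{-β}` times the integral over `(0, kδ]`, while
`2δ ∫_1^k s^{-β} ≤ C₀`. As `2 k^{-β} = 1/2`, splitting `(0, kδ] = (0, δ] ∪ (δ, kδ]` lets the left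
side absorb its own contribution.
-/

open MeasureTheory Set Real

section

variable {α : Type*} [MeasurableSpace α] {μ : Measure α} {f g w : α → ℝ}

theorem sq_integral_abs_mul_le (hf : MemLp f 2 μ) (hg : MemLp g 2 μ) :
    (∫ x, |f x| * |g x| ∂μ) ^ 2 ≤ (∫ x, f x ^ 2 ∂μ) * ∫ x, g x ^ 2 ∂μ := by
  have key := integral_mul_norm_le_Lp_mul_Lq Real.HolderConjugate.two_two
    (by simpa using hf) (by simpa using hg)
  simp only [norm_eq_abs, rpow_two, sq_abs, ← sqrt_eq_rpow] at key
  calc (∫ x, |f x| * |g x| ∂μ) ^ 2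
      ≤ (√(∫ x, f x ^ 2 ∂μ) * √(∫ x, g x ^ 2 ∂μ)) ^ 2 :=
        pow_le_pow_left₀ (integral_nonneg fun x => by positivity) key 2
    _ = (∫ x, f x ^ 2 ∂μ) * ∫ x, g x ^ 2 ∂μ := by
        rw [mul_pow, sq_sqrt (integral_nonneg fun x => sq_nonneg _),
          sq_sqrt (integral_nonneg fun x => sq_nonneg _)]

theorem memLp_two_mul_sqrt (hf : AEStronglyMeasurable f μ) (hw : AEStronglyMeasurable w μ)
    (hw0 : 0 ≤ᵐ[μ] w) (hfw : Integrable (fun x => f x ^ 2 * w x) μ) :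
    MemLp (fun x => f x * √(w x)) 2 μ := by
  refine (memLp_two_iff_integrable_sq
    (hf.mul (continuous_sqrt.comp_aestronglyMeasurable hw))).2 (hfw.congr ?_)
  filter_upwards [hw0] with x hx
  simp only [Pi.mul_apply, mul_pow, sq_sqrt hx]

theorem memLp_two_sqrt (hw : AEStronglyMeasurable w μ) (hw0 : 0 ≤ᵐ[μ] w) (hw' : Integrable w μ) :
    MemLp (fun x => √(w x)) 2 μ := by
  simpa using memLp_two_mul_sqrt (f := 1) aestronglyMeasurable_const hw hw0 (by simpa using hw')

theorem mul_sqrt_mul_sqrt_inv_ae_eq (hw0 : ∀ᵐ x ∂μ, 0 < w x) :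
    (fun x => f x * √(w x) * √((w x)⁻¹)) =ᵐ[μ] f := by
  filter_upwards [hw0] with x hx
  rw [mul_assoc, ← sqrt_mul hx.le, mul_inv_cancel₀ hx.ne', sqrt_one, mul_one]

theorem Integrable.of_sq_mul_weight (hf : AEStronglyMeasurable f μ)
    (hw : AEStronglyMeasurable w μ) (hw0 : ∀ᵐ x ∂μ, 0 < w x)
    (hfw : Integrable (fun x => f x ^ 2 * w x) μ) (hw' : Integrable (fun x => (w x)⁻¹) μ) :
    Integrable f μ :=
  ((memLp_two_mul_sqrt hf hw (hw0.mono fun _ h => h.le) hfw).integrable_mul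
    (memLp_two_sqrt hw'.1 (hw0.mono fun _ h => (inv_pos.2 h).le) hw')).congr
    (mul_sqrt_mul_sqrt_inv_ae_eq hw0)

theorem sq_integral_le_integral_sq_mul_weight (hf : AEStronglyMeasurable f μ)
    (hw : AEStronglyMeasurable w μ) (hw0 : ∀ᵐ x ∂μ, 0 < w x)
    (hfw : Integrable (fun x => f x ^ 2 * w x) μ) (hw' : Integrable (fun x => (w x)⁻¹) μ) :
    (∫ x, f x ∂μ) ^ 2 ≤ (∫ x, f x ^ 2 * w x ∂μ) * ∫ x, (w x)⁻¹ ∂μ := by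
  have hw0' : 0 ≤ᵐ[μ] w := hw0.mono fun _ h => h.le
  have hwinv0 : 0 ≤ᵐ[μ] fun x => (w x)⁻¹ := hw0.mono fun _ h => (inv_pos.2 h).le
  have hcs := sq_integral_abs_mul_le (memLp_two_mul_sqrt hf hw hw0' hfw)
    (memLp_two_sqrt hw'.1 hwinv0 hw')
  have habs : ∫ x, |f x * √(w x)| * |√((w x)⁻¹)| ∂μ = ∫ x, |f x| ∂μ := integral_congr_ae <|
    (mul_sqrt_mul_sqrt_inv_ae_eq (f := f) hw0).mono fun x hx => by simp only [← abs_mul, hx]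
  have hF : ∫ x, (f x * √(w x)) ^ 2 ∂μ = ∫ x, f x ^ 2 * w x ∂μ := integral_congr_ae <|
    hw0'.mono fun x hx => by simp only [mul_pow, sq_sqrt hx]
  have hG : ∫ x, √((w x)⁻¹) ^ 2 ∂μ = ∫ x, (w x)⁻¹ ∂μ := integral_congr_ae <|
    hwinv0.mono fun x hx => sq_sqrt hx
  calc (∫ x, f x ∂μ) ^ 2 ≤ (∫ x, |f x| ∂μ) ^ 2 := by
        rw [← sq_abs]
        exact pow_le_pow_left₀ (abs_nonneg _) (abs_integral_le_integral_abs) 2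
    _ ≤ (∫ x, f x ^ 2 * w x ∂μ) * ∫ x, (w x)⁻¹ ∂μ := by rwa [← habs, ← hF, ← hG]

theorem Integrable.sub_const_sq_mul {u : α → ℝ} (hu : AEStronglyMeasurable u μ)
    (hw0 : 0 ≤ᵐ[μ] w) (hw : Integrable w μ)
    (huw : Integrable (fun x => u x ^ 2 * w x) μ) (c : ℝ) :
    Integrable (fun x => (u x - c) ^ 2 * w x) μ := by
  refine ((huw.const_mul 2).add (hw.const_mul (2 * c ^ 2))).mono'
    (((hu.sub aestronglyMeasurable_const).pow 2).mul hw.1) ?_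
  filter_upwards [hw0] with x hx
  rw [norm_of_nonneg (mul_nonneg (sq_nonneg _) hx), Pi.add_apply]
  nlinarith [mul_le_mul_of_nonneg_right (add_sq_le (a := u x) (b := -c)) hx]

end

section

variable {E : Type*} [NormedAddCommGroup E] {k δ : ℝ}

theorem integral_Ioc_zero_comp_mul_left [NormedSpace ℝ E] (g : ℝ → E) (hk : 0 < k) (hδ : 0 ≤ δ) :
    ∫ y in Ioc 0 δ, g (k * y) = k⁻¹ • ∫ y in Ioc 0 (k * δ), g y := by
  rw [← intervalIntegral.integral_of_le hδ, ← intervalIntegral.integral_of_le (by positivity),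
    intervalIntegral.integral_comp_mul_left _ hk.ne', mul_zero]

theorem IntegrableOn.comp_mul_left_Ioc_zero {g : ℝ → E} (hg : IntegrableOn g (Ioc 0 (k * δ)))
    (hk : 0 < k) (hδ : 0 ≤ δ) : IntegrableOn (fun y => g (k * y)) (Ioc 0 δ) := by
  rw [← intervalIntegrable_iff_integrableOn_Ioc_of_le (by positivity)] at hg
  rw [← intervalIntegrable_iff_integrableOn_Ioc_of_le hδ]
  simpa [hk.ne'] using hg.comp_mul_left (c := k)

end

theorem integral_rpow_mul_left_eq {r k y : ℝ} (hk : 0 ≤ k) (hy : 0 < y) :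
    ∫ t in y..k * y, t ^ r = y ^ (r + 1) * ∫ s in (1 : ℝ)..k, s ^ r := by
  have hscale : ∫ s in (1 : ℝ)..k, (y * s) ^ r = y ^ r * ∫ s in (1 : ℝ)..k, s ^ r := by
    rw [← intervalIntegral.integral_const_mul]
    refine intervalIntegral.integral_congr fun s hs => ?_
    exact mul_rpow hy.le (le_trans (le_min zero_le_one hk) hs.1)
  rw [intervalIntegral.integral_comp_mul_left (fun t => t ^ r) hy.ne', mul_one, mul_comm y k,
    smul_eq_mul] at hscale
  rw [rpow_add_one hy.ne', mul_right_comm, ← hscale]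
  field_simp

theorem integral_one_rpow_neg_le {β k : ℝ} (hk : 1 ≤ k) :
    ∫ s in (1 : ℝ)..k, s ^ (-β) ≤
      if β = 1 then log k else (1 + k ^ (1 - β)) / |1 - β| := by
  split_ifs with hβ
  · subst hβ
    simp only [rpow_neg_one]
    rw [integral_inv_of_pos one_pos (by linarith), div_one]
  · have h0 : (0 : ℝ) ∉ uIcc 1 k := by
      rw [uIcc_of_le hk]; exact fun h => absurd h.1 (by norm_num)
    rw [integral_rpow (Or.inr ⟨fun h => hβ (neg_inj.mp h), h0⟩), one_rpow,
      show -β + 1 = 1 - β by ring]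
    calc (k ^ (1 - β) - 1) / (1 - β) ≤ |(k ^ (1 - β) - 1) / (1 - β)| := le_abs_self _
      _ ≤ (1 + k ^ (1 - β)) / |1 - β| := by
        rw [abs_div]
        have hpos : 0 < k ^ (1 - β) := rpow_pos_of_pos (by linarith) _
        gcongr
        exact abs_sub_le_iff.2 ⟨by linarith, by linarith⟩

theorem sq_sub_le_of_hasDerivAt_of_integrableOn_rpow {u u' : ℝ → ℝ} {a b β : ℝ} (ha : 0 < a)
    (hab : a ≤ b) (hderiv : ∀ t ∈ Icc a b, HasDerivAt u (u' t) t)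
    (hu' : IntegrableOn (fun t => u' t ^ 2 * t ^ β) (Ioc a b)) :
    (u b - u a) ^ 2 ≤ (∫ t in Ioc a b, u' t ^ 2 * t ^ β) * ∫ t in a..b, t ^ (-β) := by
  have hpos : ∀ᵐ t ∂volume.restrict (Ioc a b), 0 < t ^ β :=
    ae_restrict_of_forall_mem measurableSet_Ioc fun t ht => rpow_pos_of_pos (ha.trans ht.1) _
  have hmeas : AEStronglyMeasurable u' (volume.restrict (Ioc a b)) :=
    (measurable_deriv u).aestronglyMeasurable.congr <|
      ae_restrict_of_forall_mem measurableSet_Ioc fun t ht =>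
        (hderiv t (Ioc_subset_Icc_self ht)).deriv
  have hinv : IntegrableOn (fun t : ℝ => (t ^ β)⁻¹) (Ioc a b) :=
    (ContinuousOn.integrableOn_Icc ((continuousOn_id.rpow_const fun t ht =>
      Or.inl (ha.trans_le ht.1).ne').inv₀ fun t ht => (rpow_pos_of_pos (ha.trans_le ht.1) _).ne')
      ).mono_set Ioc_subset_Icc_self
  have hwm : AEStronglyMeasurable (fun t : ℝ => t ^ β) (volume.restrict (Ioc a b)) :=
    (measurable_id.pow_const β).aestronglyMeasurable
  have hint : IntegrableOn u' (Ioc a b) := Integrable.of_sq_mul_weight hmeas hwm hpos hu' hinv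
  rw [← intervalIntegral.integral_eq_sub_of_hasDerivAt
      (fun t ht => hderiv t (uIcc_of_le hab ▸ ht))
      ((intervalIntegrable_iff_integrableOn_Ioc_of_le hab).2 hint),
    intervalIntegral.integral_of_le hab, intervalIntegral.integral_of_le hab,
    setIntegral_congr_fun measurableSet_Ioc fun t ht => rpow_neg (ha.trans ht.1).le β]
  exact sq_integral_le_integral_sq_mul_weight hmeas hwm hpos hu' hinv

theorem sub_sq_mul_rpow_le {u u' : ℝ → ℝ} {β k y : ℝ} (hk : 1 ≤ k) (hy : 0 < y)
    (hderiv : ∀ t ∈ Icc y (k * y), HasDerivAt u (u' t) t)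
    (hu' : IntegrableOn (fun t => u' t ^ 2 * t ^ β) (Ioc y (k * y))) (c : ℝ) :
    (u y - c) ^ 2 * y ^ (β - 1) ≤
      2 * k ^ (1 - β) * ((u (k * y) - c) ^ 2 * (k * y) ^ (β - 1)) +
        2 * (∫ s in (1 : ℝ)..k, s ^ (-β)) * ∫ t in Ioc y (k * y), u' t ^ 2 * t ^ β := by
  have hk0 : 0 < k := zero_lt_one.trans_le hk
  have hsq : (u y - c) ^ 2 ≤ 2 * (u (k * y) - c) ^ 2 + 2 * (u (k * y) - u y) ^ 2 := by
    nlinarith [add_sq_le (a := u (k * y) - c) (b := u y - u (k * y))]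
  have hdiff := sq_sub_le_of_hasDerivAt_of_integrableOn_rpow hy (le_mul_of_one_le_left hy.le hk)
    hderiv hu'
  have hweight : k ^ (1 - β) * (k * y) ^ (β - 1) = y ^ (β - 1) := by
    rw [mul_rpow hk0.le hy.le, ← mul_assoc, ← rpow_add hk0, sub_add_sub_cancel, sub_self,
      rpow_zero, one_mul]
  have hscale : (∫ t in y..k * y, t ^ (-β)) * y ^ (β - 1) = ∫ s in (1 : ℝ)..k, s ^ (-β) := by
    rw [integral_rpow_mul_left_eq hk0.le hy, mul_right_comm, ← rpow_add hy]
    norm_num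
  have hy0 : 0 ≤ y ^ (β - 1) := rpow_nonneg hy.le _
  calc (u y - c) ^ 2 * y ^ (β - 1)
      ≤ (2 * (u (k * y) - c) ^ 2 + 2 * (u (k * y) - u y) ^ 2) * y ^ (β - 1) :=
        mul_le_mul_of_nonneg_right hsq hy0
    _ ≤ 2 * (u (k * y) - c) ^ 2 * y ^ (β - 1) + 2 * ((∫ t in Ioc y (k * y), u' t ^ 2 * t ^ β) *
          ((∫ t in y..k * y, t ^ (-β)) * y ^ (β - 1))) := by
        nlinarith [mul_le_mul_of_nonneg_right hdiff hy0]
    _ = _ := by rw [hscale, ← hweight]; ring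

theorem integrableOn_sub_sq_mul_rpow {u : ℝ → ℝ} {β a : ℝ} (hβ : 0 < β)
    (hcont : ContinuousOn u (Ioc 0 a))
    (hu : IntegrableOn (fun y => u y ^ 2 * y ^ (β - 1)) (Ioc 0 a)) (c : ℝ) :
    IntegrableOn (fun y => (u y - c) ^ 2 * y ^ (β - 1)) (Ioc 0 a) :=
  Integrable.sub_const_sq_mul (hcont.aestronglyMeasurable measurableSet_Ioc)
    (ae_restrict_of_forall_mem measurableSet_Ioc fun y hy => rpow_nonneg hy.1.le _)
    (intervalIntegral.intervalIntegrable_rpow' (by linarith)).1 hu c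

theorem integral_sub_sq_mul_rpow_le {u u' : ℝ → ℝ} {β k δ c : ℝ} (hk : 1 ≤ k) (hδ : 0 ≤ δ)
    (hderiv : ∀ y ∈ Ioc 0 (k * δ), HasDerivAt u (u' y) y)
    (hg : IntegrableOn (fun y => (u y - c) ^ 2 * y ^ (β - 1)) (Ioc 0 (k * δ)))
    (hu' : IntegrableOn (fun y => u' y ^ 2 * y ^ β) (Ioc 0 (k * δ))) :
    ∫ y in Ioc 0 δ, (u y - c) ^ 2 * y ^ (β - 1) ≤
      2 * k ^ (-β) * (∫ y in Ioc 0 (k * δ), (u y - c) ^ 2 * y ^ (β - 1)) +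
        2 * δ * (∫ s in (1 : ℝ)..k, s ^ (-β)) * ∫ y in Ioc 0 (k * δ), u' y ^ 2 * y ^ β := by
  have hk0 : 0 < k := zero_lt_one.trans_le hk
  set g : ℝ → ℝ := fun y => (u y - c) ^ 2 * y ^ (β - 1)
  set M := ∫ s in (1 : ℝ)..k, s ^ (-β)
  set E := ∫ y in Ioc 0 (k * δ), u' y ^ 2 * y ^ β
  have hM : 0 ≤ M := intervalIntegral.integral_nonneg hk fun s hs =>
    rpow_nonneg (zero_le_one.trans hs.1) _
  have hpt : ∀ y ∈ Ioc 0 δ, g y ≤ 2 * k ^ (1 - β) * g (k * y) + 2 * M * E := by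
    intro y hy
    have hsub : Icc y (k * y) ⊆ Ioc 0 (k * δ) := fun t ht =>
      ⟨hy.1.trans_le ht.1, ht.2.trans (by gcongr; exact hy.2)⟩
    refine (sub_sq_mul_rpow_le hk hy.1 (fun t ht => hderiv t (hsub ht))
      (hu'.mono_set (Ioc_subset_Icc_self.trans hsub)) c).trans ?_
    gcongr
    exact setIntegral_mono_set hu' (ae_restrict_of_forall_mem measurableSet_Ioc fun t ht =>
      mul_nonneg (sq_nonneg _) (rpow_nonneg ht.1.le _))
      (Ioc_subset_Icc_self.trans hsub).eventuallyLE
  have hgk := (IntegrableOn.comp_mul_left_Ioc_zero hg hk0 hδ).const_mul (2 * k ^ (1 - β))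
  calc ∫ y in Ioc 0 δ, g y
      ≤ ∫ y in Ioc 0 δ, (2 * k ^ (1 - β) * g (k * y) + 2 * M * E) :=
        setIntegral_mono_on (hg.mono_set (Ioc_subset_Ioc_right (le_mul_of_one_le_left hδ hk)))
          (hgk.add (integrableOn_const measure_Ioc_lt_top.ne)) measurableSet_Ioc hpt
    _ = 2 * (k ^ (1 - β) * k⁻¹) * (∫ y in Ioc 0 (k * δ), g y) + 2 * δ * M * E := by
        rw [integral_add hgk (integrableOn_const measure_Ioc_lt_top.ne), integral_const_mul,
          integral_Ioc_zero_comp_mul_left g hk0 hδ, setIntegral_const, volume_real_Ioc_of_le hδ]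
        simp only [smul_eq_mul]
        ring
    _ = _ := by rw [← rpow_neg_one, ← rpow_add hk0]; ring_nf

/-- One-dimensional core of the degenerate-weight Poincaré inequality. Let `β > 0` and
`k > 1` satisfy `2 k^{-β} = 1/2`. For `u` with `u ∈ L²((0,kδ), y^{β-1} dy)` and
`u' ∈ L²((0,kδ), y^β dy)`, and any `c ∈ ℝ`:
`∫₀^δ |u-c|² y^{β-1} ≤ 2k^{-β} ∫₀^{kδ} |u-c|² y^{β-1} + C₀ ∫₀^{kδ} |u'|² y^β`, with
`C₀ = 2δ(1+k^{1-β})/|1-β|` if `β ≠ 1` and `C₀ = 2δ log k` if `β = 1`; and consequently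
`∫₀^δ |u-c|² y^{β-1} ≤ (4k^{-β}/(1-2k^{-β})) ∫_δ^{kδ} |u-c|² y^{β-1}
  + (C₀/(1-2k^{-β})) ∫₀^{kδ} |u'|² y^β`. -/
theorem one_dim_poincare_core (β k δ : ℝ) (hβ : 0 < β) (hk : 1 < k) (hδ : 0 < δ)
    (hknorm : 2 * k ^ (-β) = 1/2) (u u' : ℝ → ℝ)
    (hderiv : ∀ y ∈ Set.Ioc 0 (k * δ), HasDerivAt u (u' y) y)
    (hu : IntegrableOn (fun y => (u y) ^ 2 * y ^ (β - 1)) (Set.Ioc 0 (k * δ)))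
    (hu' : IntegrableOn (fun y => (u' y) ^ 2 * y ^ β) (Set.Ioc 0 (k * δ)))
    (c : ℝ) :
    (∫ y in Set.Ioc 0 δ, (u y - c) ^ 2 * y ^ (β - 1)) ≤
        2 * k ^ (-β) * (∫ y in Set.Ioc 0 (k * δ), (u y - c) ^ 2 * y ^ (β - 1)) +
        (if β = 1 then 2 * δ * Real.log k else 2 * δ * (1 + k ^ (1 - β)) / |1 - β|) *
          (∫ y in Set.Ioc 0 (k * δ), (u' y) ^ 2 * y ^ β) ∧
    (∫ y in Set.Ioc 0 δ, (u y - c) ^ 2 * y ^ (β - 1)) ≤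
        4 * k ^ (-β) / (1 - 2 * k ^ (-β)) *
          (∫ y in Set.Ioc δ (k * δ), (u y - c) ^ 2 * y ^ (β - 1)) +
        ((if β = 1 then 2 * δ * Real.log k else 2 * δ * (1 + k ^ (1 - β)) / |1 - β|) /
            (1 - 2 * k ^ (-β))) *
          (∫ y in Set.Ioc 0 (k * δ), (u' y) ^ 2 * y ^ β) := by
  set C₀ := if β = 1 then 2 * δ * log k else 2 * δ * (1 + k ^ (1 - β)) / |1 - β| with hC₀def
  have hg := integrableOn_sub_sq_mul_rpow hβ
    (fun y hy => (hderiv y hy).continuousAt.continuousWithinAt) hu c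
  have hC₀ : 2 * δ * (∫ s in (1 : ℝ)..k, s ^ (-β)) * (∫ y in Ioc 0 (k * δ), u' y ^ 2 * y ^ β) ≤
      C₀ * ∫ y in Ioc 0 (k * δ), u' y ^ 2 * y ^ β := by
    refine mul_le_mul_of_nonneg_right ?_ (setIntegral_nonneg measurableSet_Ioc fun y hy =>
      mul_nonneg (sq_nonneg _) (rpow_nonneg hy.1.le _))
    refine (mul_le_mul_of_nonneg_left (integral_one_rpow_neg_le hk.le) (by positivity)).trans_eq ?_
    rw [hC₀def]
    split_ifs <;> ring
  have part1 := (integral_sub_sq_mul_rpow_le hk.le hδ.le hderiv hg hu').trans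
    (add_le_add_right hC₀ _)
  refine ⟨part1, ?_⟩
  have hδk : δ ≤ k * δ := le_mul_of_one_le_left hδ.le hk.le
  have hsplit : ∫ y in Ioc 0 (k * δ), (u y - c) ^ 2 * y ^ (β - 1) =
      (∫ y in Ioc 0 δ, (u y - c) ^ 2 * y ^ (β - 1)) +
        ∫ y in Ioc δ (k * δ), (u y - c) ^ 2 * y ^ (β - 1) := by
    rw [← Ioc_union_Ioc_eq_Ioc hδ.le hδk, setIntegral_union (Ioc_disjoint_Ioc_of_le le_rfl)
      measurableSet_Ioc (hg.mono_set (Ioc_subset_Ioc_right hδk))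
      (hg.mono_set (Ioc_subset_Ioc_left hδ.le))]
  rw [hsplit, hknorm] at part1
  have hJ : 0 ≤ ∫ y in Ioc δ (k * δ), (u y - c) ^ 2 * y ^ (β - 1) :=
    setIntegral_nonneg measurableSet_Ioc fun y hy =>
      mul_nonneg (sq_nonneg _) (rpow_nonneg (hδ.trans hy.1).le _)
  rw [hknorm, show 4 * k ^ (-β) = 1 by linarith]
  norm_num
  linarith
end

section
/- Define the domain O = ∪_{N≥1} (C_N \ C'_N) where C_N = {(x,y) ∈ B_{1/N}((0,0)) : 0 < y < N^{-2/β} x} and C'_N = {(x,y) ∈ B_{1/(N+1)}((0,0)) : 0 < y < N^{-2/β} x}, with B_R the Koch ball and β > 0 fixed. Then the ratio |O ∩ B_{1/N}((0,0))|_{β-1} / |B_{1/N}((0,0))|_{β-1} tends to 0 as N → ∞; in particular, O fails the uniform measure-density condition c^{-1}|B_R(z_0)|_{β-1} ≤ |O ∩ B_R(z_0)|_{β-1} at z_0 = (0,0). -/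
open MeasureTheory Filter

/-- The cone piece `C_N = {(x,y) ∈ B_{1/N}(0) : 0 < y < N^{-2/β} x}`. -/
noncomputable def coneC (β : ℝ) (N : ℕ) : Set (ℝ × ℝ) :=
  {z | z ∈ kochBall (1 / (N : ℝ)) (0, 0) ∧ z.2 < (N : ℝ) ^ (-(2 / β)) * z.1}

/-- The cone piece `C'_N = {(x,y) ∈ B_{1/(N+1)}(0) : 0 < y < N^{-2/β} x}`. -/
noncomputable def coneC' (β : ℝ) (N : ℕ) : Set (ℝ × ℝ) :=
  {z | z ∈ kochBall (1 / ((N : ℝ) + 1)) (0, 0) ∧ z.2 < (N : ℝ) ^ (-(2 / β)) * z.1}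

/-- Lebesgue's-thorn–type domain `O = ⋃_{N ≥ 1} (C_N \ C'_N)`. -/
noncomputable def thornDomain (β : ℝ) : Set (ℝ × ℝ) :=
  ⋃ N : ℕ, ⋃ (_ : 1 ≤ N), (coneC β N \ coneC' β N)

/-!
The Koch ball `B_R(0)` contains the square `(0, R²/2)²` and lies in the box
`(-2R², 2R²) × (0, 2R²)`, so its `y^{β-1}`-weight is comparable to `R^{2(β+1)}`.
A piece `C_k \ C'_k` avoids `B_{1/(k+1)}(0)`, so only pieces with `k ≥ N` meet `B_{1/N}(0)`;
hence `O ∩ B_{1/N}(0)` lies in the thin cone `0 < y < N^{-2/β} x` inside that box. Integrating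
`y^{β-1}` over `(0, 2R²) × (0, N^{-2/β} · 2R²)` gains the factor `(N^{-2/β})^β = N^{-2}`, so the
density ratio is at most `4^{β+1} / N²`.
-/

open Set

section WeightedVolume

variable {β : ℝ}

lemma integral_Ioo_zero_rpow_sub_one (hβ : 0 < β) {b : ℝ} (hb : 0 ≤ b) :
    ∫ y in Ioo 0 b, y ^ (β - 1) = b ^ β / β := by
  rw [← integral_Ioc_eq_integral_Ioo, ← intervalIntegral.integral_of_le hb,
    integral_rpow (Or.inl (by linarith))]
  simp [Real.zero_rpow hβ.ne']

lemma integrableOn_Ioo_zero_rpow_sub_one (hβ : 0 < β) (b : ℝ) :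
    IntegrableOn (fun y : ℝ => y ^ (β - 1)) (Ioo 0 b) :=
  (intervalIntegral.intervalIntegrable_rpow' (by linarith)).1.mono_set Ioo_subset_Ioc_self

lemma volume_restrict_prod (s t : Set ℝ) :
    (volume : Measure (ℝ × ℝ)).restrict (s ×ˢ t) =
      (volume.restrict s).prod (volume.restrict t) := by
  rw [Measure.volume_eq_prod, Measure.prod_restrict]

lemma integrableOn_snd_rpow_prod_Ioo (hβ : 0 < β) {s : Set ℝ} (hs : volume s ≠ ⊤) (b : ℝ) :
    IntegrableOn (fun z : ℝ × ℝ => z.2 ^ (β - 1)) (s ×ˢ Ioo 0 b) := by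
  have : IsFiniteMeasure (volume.restrict s) := isFiniteMeasure_restrict.2 hs
  simpa [IntegrableOn, volume_restrict_prod] using
    (integrable_const (1 : ℝ)).mul_prod (integrableOn_Ioo_zero_rpow_sub_one hβ b)

lemma setIntegral_snd_rpow_prod_Ioo (hβ : 0 < β) (s : Set ℝ) {b : ℝ} (hb : 0 ≤ b) :
    ∫ z in s ×ˢ Ioo 0 b, z.2 ^ (β - 1) = volume.real s * (b ^ β / β) := by
  rw [volume_restrict_prod, integral_fun_snd (fun y : ℝ => y ^ (β - 1)),
    integral_Ioo_zero_rpow_sub_one hβ hb, smul_eq_mul, measureReal_restrict_apply_univ]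

lemma setIntegral_Ioo_prod_Ioo_snd_rpow (hβ : 0 < β) {a b : ℝ} (ha : 0 ≤ a) (hb : 0 ≤ b) :
    ∫ z in Ioo 0 a ×ˢ Ioo 0 b, z.2 ^ (β - 1) = a * (b ^ β / β) := by
  rw [setIntegral_snd_rpow_prod_Ioo hβ _ hb, Real.volume_real_Ioo_of_le ha, sub_zero]

lemma ae_restrict_snd_rpow_nonneg (β : ℝ) {s : Set (ℝ × ℝ)} (hs : s ⊆ {z | 0 < z.2}) :
    ∀ᵐ z ∂volume.restrict s, 0 ≤ z.2 ^ (β - 1) :=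
  ae_restrict_of_ae_restrict_of_subset hs <|
    ae_restrict_of_forall_mem (measurableSet_lt measurable_const measurable_snd)
      fun _ hz => Real.rpow_nonneg (le_of_lt hz) _

lemma setIntegral_snd_rpow_nonneg {s : Set (ℝ × ℝ)} (hs : s ⊆ {z | 0 < z.2}) :
    0 ≤ ∫ z in s, z.2 ^ (β - 1) :=
  setIntegral_nonneg_of_ae_restrict (ae_restrict_snd_rpow_nonneg β hs)

lemma setIntegral_snd_rpow_mono_set {s t : Set (ℝ × ℝ)} (ht : t ⊆ {z | 0 < z.2})
    (hint : IntegrableOn (fun z : ℝ × ℝ => z.2 ^ (β - 1)) t) (hst : s ⊆ t) :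
    ∫ z in s, z.2 ^ (β - 1) ≤ ∫ z in t, z.2 ^ (β - 1) :=
  setIntegral_mono_set hint (ae_restrict_snd_rpow_nonneg β ht) hst.eventuallyLE

end WeightedVolume

section KochBall

lemma kochBall_subset_upperHalfPlane (R : ℝ) (z₀ : ℝ × ℝ) :
    kochBall R z₀ ⊆ {z | 0 < z.2} :=
  fun _ hz => hz.1

lemma kochBall_mono {R R' : ℝ} (h : R ≤ R') (z₀ : ℝ × ℝ) : kochBall R z₀ ⊆ kochBall R' z₀ :=
  fun _ hz => ⟨hz.1, hz.2.trans_le h⟩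

lemma mem_kochBall_origin {R : ℝ} (hR : 0 < R) {z : ℝ × ℝ} :
    z ∈ kochBall R (0, 0) ↔ 0 < z.2 ∧ z.1 ^ 2 + z.2 ^ 2 < R ^ 2 * (z.2 + √(z.1 ^ 2 + z.2 ^ 2)) := by
  refine and_congr_right fun hy => ?_
  have hs : 0 < z.2 + √(z.1 ^ 2 + z.2 ^ 2) := by positivity
  simp only [kochDist, enorm2, sub_zero, add_zero]
  rw [div_lt_iff₀ (Real.sqrt_pos.2 hs), Real.sqrt_lt' (by positivity), mul_pow,
    Real.sq_sqrt hs.le]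

lemma kochBall_origin_subset_Ioo_prod_Ioo {R : ℝ} (hR : 0 < R) :
    kochBall R (0, 0) ⊆ Ioo (-(2 * R ^ 2)) (2 * R ^ 2) ×ˢ Ioo 0 (2 * R ^ 2) := by
  intro z hz
  obtain ⟨hy, h⟩ := (mem_kochBall_origin hR).1 hz
  set r := √(z.1 ^ 2 + z.2 ^ 2)
  have hr2 : r ^ 2 = z.1 ^ 2 + z.2 ^ 2 := Real.sq_sqrt (by positivity)
  have hyr : z.2 ≤ r := Real.le_sqrt_of_sq_le (by nlinarith)
  have hxr : |z.1| ≤ r := Real.abs_le_sqrt (by nlinarith)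
  -- `r² < R² (y + r) ≤ 2 R² r`
  have hr : r < 2 * R ^ 2 := by nlinarith
  have hx := abs_lt.1 (hxr.trans_lt hr)
  exact ⟨hx, hy, hyr.trans_lt hr⟩

lemma Ioo_prod_Ioo_subset_kochBall_origin {R : ℝ} (hR : 0 < R) :
    Ioo 0 (R ^ 2 / 2) ×ˢ Ioo 0 (R ^ 2 / 2) ⊆ kochBall R (0, 0) := by
  rintro z ⟨⟨hx0, hx1⟩, hy0, hy1⟩
  refine (mem_kochBall_origin hR).2 ⟨hy0, ?_⟩
  set r := √(z.1 ^ 2 + z.2 ^ 2)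
  have hr2 : r ^ 2 = z.1 ^ 2 + z.2 ^ 2 := Real.sq_sqrt (by positivity)
  have hr : r < R ^ 2 := by nlinarith [Real.sqrt_nonneg (z.1 ^ 2 + z.2 ^ 2)]
  nlinarith [Real.sqrt_nonneg (z.1 ^ 2 + z.2 ^ 2)]

end KochBall

section Thorn

variable {β : ℝ}

lemma snd_lt_of_mem_thornDomain_inter_kochBall (hβ : 0 < β) {N : ℕ} {z : ℝ × ℝ}
    (hz : z ∈ thornDomain β ∩ kochBall (1 / (N : ℝ)) (0, 0)) :
    z.2 < (N : ℝ) ^ (-(2 / β)) * z.1 := by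
  obtain ⟨hzO, hzB⟩ := hz
  simp only [thornDomain, mem_iUnion] at hzO
  obtain ⟨k, -, ⟨-, hcone⟩, hzC'⟩ := hzO
  have hNk : N ≤ k := by
    by_contra! hkN
    have hle : 1 / (N : ℝ) ≤ 1 / ((k : ℝ) + 1) :=
      one_div_le_one_div_of_le (by positivity) (by exact_mod_cast hkN)
    exact hzC' ⟨kochBall_mono hle _ hzB, hcone⟩
  have hN : (0 : ℝ) < N :=
    one_div_pos.1 ((div_nonneg (Real.sqrt_nonneg _) (Real.sqrt_nonneg _)).trans_lt hzB.2)
  have hx : 0 < z.1 := pos_of_mul_pos_right (hzB.1.trans hcone) (by positivity)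
  have hslope : (k : ℝ) ^ (-(2 / β)) ≤ (N : ℝ) ^ (-(2 / β)) :=
    Real.rpow_le_rpow_of_nonpos hN (by exact_mod_cast hNk)
      (neg_nonpos.2 (by positivity))
  exact hcone.trans_le (mul_le_mul_of_nonneg_right hslope hx.le)

end Thorn

section Estimates

variable {β : ℝ}

lemma thornDomain_inter_kochBall_subset (hβ : 0 < β) {N : ℕ} (hN : 0 < N) :
    thornDomain β ∩ kochBall (1 / (N : ℝ)) (0, 0) ⊆
      Ioo 0 (2 * (1 / (N : ℝ)) ^ 2) ×ˢ Ioo 0 ((N : ℝ) ^ (-(2 / β)) * (2 * (1 / (N : ℝ)) ^ 2)) := by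
  intro z hz
  have hcone := snd_lt_of_mem_thornDomain_inter_kochBall hβ hz
  obtain ⟨⟨-, hx⟩, hy, -⟩ := kochBall_origin_subset_Ioo_prod_Ioo (by positivity) hz.2
  have hx0 : 0 < z.1 := pos_of_mul_pos_right (hy.trans hcone) (by positivity)
  exact ⟨⟨hx0, hx⟩, hy, hcone.trans (by gcongr)⟩

lemma integrableOn_kochBall_origin (hβ : 0 < β) {R : ℝ} (hR : 0 < R) :
    IntegrableOn (fun z : ℝ × ℝ => z.2 ^ (β - 1)) (kochBall R (0, 0)) :=
  (integrableOn_snd_rpow_prod_Ioo hβ measure_Ioo_lt_top.ne _).mono_set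
    (kochBall_origin_subset_Ioo_prod_Ioo hR)

lemma rpow_add_one_div_le_setIntegral_kochBall_origin (hβ : 0 < β) {R : ℝ} (hR : 0 < R) :
    (R ^ 2 / 2) ^ (β + 1) / β ≤ ∫ z in kochBall R (0, 0), z.2 ^ (β - 1) :=
  calc (R ^ 2 / 2) ^ (β + 1) / β
      = ∫ z in Ioo 0 (R ^ 2 / 2) ×ˢ Ioo 0 (R ^ 2 / 2), z.2 ^ (β - 1) := by
        rw [setIntegral_Ioo_prod_Ioo_snd_rpow hβ (by positivity) (by positivity),
          Real.rpow_add_one (by positivity)]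
        ring
    _ ≤ _ := setIntegral_snd_rpow_mono_set (kochBall_subset_upperHalfPlane _ _)
        (integrableOn_kochBall_origin hβ hR) (Ioo_prod_Ioo_subset_kochBall_origin hR)

lemma setIntegral_thornDomain_inter_kochBall_le (hβ : 0 < β) {N : ℕ} (hN : 0 < N) :
    ∫ z in thornDomain β ∩ kochBall (1 / (N : ℝ)) (0, 0), z.2 ^ (β - 1) ≤
      (1 / (N : ℝ)) ^ 2 * ((2 * (1 / (N : ℝ)) ^ 2) ^ (β + 1) / β) := by
  set a := 2 * (1 / (N : ℝ)) ^ 2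
  have hslope : ((N : ℝ) ^ (-(2 / β))) ^ β = (1 / (N : ℝ)) ^ 2 := by
    rw [← Real.rpow_mul N.cast_nonneg, neg_mul, div_mul_cancel₀ 2 hβ.ne', Real.rpow_neg
      N.cast_nonneg, Real.rpow_two, one_div, inv_pow]
  calc ∫ z in thornDomain β ∩ kochBall (1 / (N : ℝ)) (0, 0), z.2 ^ (β - 1)
      ≤ ∫ z in Ioo 0 a ×ˢ Ioo 0 ((N : ℝ) ^ (-(2 / β)) * a), z.2 ^ (β - 1) :=
        setIntegral_snd_rpow_mono_set (fun _ hz => hz.2.1)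
          (integrableOn_snd_rpow_prod_Ioo hβ measure_Ioo_lt_top.ne _)
          (thornDomain_inter_kochBall_subset hβ hN)
    _ = a * (((N : ℝ) ^ (-(2 / β)) * a) ^ β / β) :=
        setIntegral_Ioo_prod_Ioo_snd_rpow hβ (by positivity) (by positivity)
    _ = (1 / (N : ℝ)) ^ 2 * (a ^ (β + 1) / β) := by
        rw [Real.mul_rpow (by positivity) (by positivity), hslope,
          Real.rpow_add_one (by positivity)]
        ring

lemma thornDomain_density_le (hβ : 0 < β) {N : ℕ} (hN : 0 < N) :
    (∫ z in thornDomain β ∩ kochBall (1 / (N : ℝ)) (0, 0), z.2 ^ (β - 1)) /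
        (∫ z in kochBall (1 / (N : ℝ)) (0, 0), z.2 ^ (β - 1)) ≤
      4 ^ (β + 1) * (1 / (N : ℝ)) ^ 2 := by
  set R := 1 / (N : ℝ)
  have hR : 0 < R := by positivity
  calc _ ≤ R ^ 2 * ((2 * R ^ 2) ^ (β + 1) / β) / ((R ^ 2 / 2) ^ (β + 1) / β) :=
        div_le_div₀ (by positivity) (setIntegral_thornDomain_inter_kochBall_le hβ hN)
          (by positivity) (rpow_add_one_div_le_setIntegral_kochBall_origin hβ hR)
    _ = 4 ^ (β + 1) * R ^ 2 := by
        rw [show 2 * R ^ 2 = 4 * (R ^ 2 / 2) by ring,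
          Real.mul_rpow (by norm_num) (by positivity)]
        field_simp

lemma tendsto_thornDomain_density (hβ : 0 < β) :
    Tendsto
      (fun N : ℕ =>
        (∫ z in thornDomain β ∩ kochBall (1 / (N : ℝ)) (0, 0), z.2 ^ (β - 1)) /
        (∫ z in kochBall (1 / (N : ℝ)) (0, 0), z.2 ^ (β - 1)))
      atTop (nhds 0) := by
  refine squeeze_zero' (Eventually.of_forall fun N => div_nonneg ?_ ?_)
    ((eventually_gt_atTop 0).mono fun N hN => thornDomain_density_le hβ hN) ?_
  · exact setIntegral_snd_rpow_nonneg fun _ hz => hz.2.1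
  · exact setIntegral_snd_rpow_nonneg (kochBall_subset_upperHalfPlane _ _)
  · simpa using (tendsto_one_div_atTop_nhds_zero_nat.pow 2).const_mul (4 ^ (β + 1) : ℝ)

end Estimates

lemma not_exists_density_lower_bound_of_tendsto {f g : ℝ → ℝ}
    (hg : ∀ᶠ N : ℕ in atTop, 0 < g (1 / N))
    (h : Tendsto (fun N : ℕ => f (1 / N) / g (1 / N)) atTop (nhds 0)) :
    ¬ ∃ c > (0 : ℝ), ∃ Rbar > (0 : ℝ), ∀ R : ℝ, 0 < R → R ≤ Rbar → c⁻¹ * g R ≤ f R := by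
  rintro ⟨c, hc, Rbar, hRbar, hle⟩
  obtain ⟨N, ⟨⟨hN, hgN⟩, hsmall⟩, hRN⟩ :=
    (((eventually_gt_atTop 0).and hg).and (h.eventually_lt_const (inv_pos.2 hc))).and
      (tendsto_one_div_atTop_nhds_zero_nat.eventually_lt_const hRbar) |>.exists
  have := hle (1 / N) (by positivity) hRN.le
  rw [← le_div_iff₀ hgN] at this
  exact this.not_gt hsmall

/-- The thorn domain fails the uniform measure-density condition at the origin:
the ratio `|O ∩ B_{1/N}(0)|_{β-1} / |B_{1/N}(0)|_{β-1}` tends to `0`, and in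
particular there is no `c > 0` with
`c⁻¹ |B_R(0)|_{β-1} ≤ |O ∩ B_R(0)|_{β-1}` for all small `R > 0`. -/
theorem thornDomain_measure_density_fails (β : ℝ) (hβ : 0 < β) :
    Tendsto
      (fun N : ℕ =>
        (∫ z in thornDomain β ∩ kochBall (1 / (N : ℝ)) (0, 0), z.2 ^ (β - 1)) /
        (∫ z in kochBall (1 / (N : ℝ)) (0, 0), z.2 ^ (β - 1)))
      atTop (nhds 0) ∧
    ¬ ∃ c > (0:ℝ), ∃ Rbar > (0:ℝ), ∀ R : ℝ, 0 < R → R ≤ Rbar →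
        c⁻¹ * (∫ z in kochBall R (0, 0), z.2 ^ (β - 1)) ≤
          ∫ z in thornDomain β ∩ kochBall R (0, 0), z.2 ^ (β - 1) := by
  have hball : ∀ᶠ N : ℕ in atTop, 0 < ∫ z in kochBall (1 / (N : ℝ)) (0, 0), z.2 ^ (β - 1) :=
    (eventually_gt_atTop 0).mono fun N hN => lt_of_lt_of_le (by positivity)
      (rpow_add_one_div_le_setIntegral_kochBall_origin hβ (by positivity : 0 < 1 / (N : ℝ)))
  have hdensity := tendsto_thornDomain_density hβ
  exact ⟨hdensity, not_exists_density_lower_bound_of_tendsto hball hdensity⟩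
end
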